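/- Let S ∈ Mat(2n,ℝ) be a Hamiltonian matrix which is hyperbolic. Then V^−(S) = {v ∈ ℝ^{2n} : exp(tS)v → 0 as t → +∞} is a Lagrangian subspace of (ℝ^{2n}, ω): it is isotropic and has dimension n. -/

import Mathlib

/-!
Since `S` is Hamiltonian, `exp (t • S)` preserves `ω`, so `ω u v = ω (e^{tS} u) (e^{tS} v) → 0`
whenever both trajectories tend to `0` along the same direction of time: `V⁻(S)` and `V⁺(S)` are
isotropic, hence of dimension at most `n` because `ω` is nondegenerate. On a complex generalized
eigenvector for `μ`, `exp (t • S)` acts as `e^{tμ}` times a polynomial in `t`; hyperbolicity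
(`Re μ ≠ 0`) thus makes it decay in forward or in backward time, and taking real parts gives
`V⁻(S) + V⁺(S) = ℝ^{2n}`. Therefore `dim V⁻(S) = n`.
-/

open Matrix Filter Topology

/-- The standard complex structure `J = [[0, -Iₙ],[Iₙ, 0]]` on `ℝ^{2n}`. -/
noncomputable def Jmat (n : ℕ) : Matrix (Fin (2*n)) (Fin (2*n)) ℝ :=
  Matrix.reindex (finSumFinEquiv.trans (finCongr (two_mul n).symm))
    (finSumFinEquiv.trans (finCongr (two_mul n).symm))
    (Matrix.fromBlocks 0 (-1) 1 0)

/-- The standard symplectic form `ω(u,v) = ⟨Ju, v⟩` on `ℝ^{2n}`. -/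
noncomputable def symplForm (n : ℕ) (u v : Fin (2*n) → ℝ) : ℝ :=
  (Jmat n) *ᵥ u ⬝ᵥ v

/-- A real matrix is hyperbolic if no eigenvalue of its complexification is purely imaginary. -/
def IsHyperbolic {d : ℕ} (T : Matrix (Fin d) (Fin d) ℝ) : Prop :=
  ∀ μ : ℂ, Module.End.HasEigenvalue (Matrix.toLin' (T.map Complex.ofReal)) μ → μ.re ≠ 0

/-- `V⁻(T)`: vectors whose trajectory under `exp(tT)` tends to `0` as `t → +∞`. -/
def negSpace (d : ℕ) (T : Matrix (Fin d) (Fin d) ℝ) : Submodule ℝ (Fin d → ℝ) where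
  carrier := {v | Tendsto (fun t : ℝ => NormedSpace.exp (t • T) *ᵥ v) atTop (nhds 0)}
  add_mem' := by
    intro a b ha hb
    simpa [Matrix.mulVec_add] using ha.add hb
  zero_mem' := by
    simpa [Matrix.mulVec_zero] using
      (tendsto_const_nhds : Tendsto (fun _ : ℝ => (0 : Fin d → ℝ)) atTop (nhds 0))
  smul_mem' := by
    intro c a ha
    simpa [Matrix.mulVec_smul] using ha.const_smul c

/-- `V⁺(T)`: vectors whose trajectory under `exp(tT)` tends to `0` as `t → -∞`. -/
def posSpace (d : ℕ) (T : Matrix (Fin d) (Fin d) ℝ) : Submodule ℝ (Fin d → ℝ) where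
  carrier := {v | Tendsto (fun t : ℝ => NormedSpace.exp (t • T) *ᵥ v) atBot (nhds 0)}
  add_mem' := by
    intro a b ha hb
    simpa [Matrix.mulVec_add] using ha.add hb
  zero_mem' := by
    simpa [Matrix.mulVec_zero] using
      (tendsto_const_nhds : Tendsto (fun _ : ℝ => (0 : Fin d → ℝ)) atBot (nhds 0))
  smul_mem' := by
    intro c a ha
    simpa [Matrix.mulVec_smul] using ha.const_smul c

open NormedSpace

-- The lemmas about `exp` in Banach algebras need some normed ring structure on matrices;
-- `exp` itself does not depend on the choice.
attribute [local instance] Matrix.linftyOpNormedRing Matrix.linftyOpNormedAlgebra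

theorem Complex.tendsto_exp_mul_mul_pow_atTop {μ : ℂ} (hμ : μ.re < 0) (j : ℕ) :
    Tendsto (fun t : ℝ => Complex.exp (t * μ) * (t : ℂ) ^ j) atTop (𝓝 0) := by
  rw [tendsto_zero_iff_norm_tendsto_zero]
  refine (tendsto_rpow_mul_exp_neg_mul_atTop_nhds_zero j (-μ.re) (neg_pos.2 hμ)).congr' ?_
  filter_upwards [eventually_ge_atTop 0] with t ht
  rw [norm_mul, norm_pow, Complex.norm_exp, Complex.norm_real, Real.norm_of_nonneg ht,
    Real.rpow_natCast, neg_neg, Complex.re_ofReal_mul, mul_comm, mul_comm t]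

theorem LinearMap.BilinForm.two_mul_finrank_le_of_isotropic {K V : Type*} [Field K]
    [AddCommGroup V] [Module K V] [FiniteDimensional K V] {B : LinearMap.BilinForm K V}
    (hB : B.Nondegenerate) {W : Submodule K V} (hW : ∀ u ∈ W, ∀ v ∈ W, B u v = 0) :
    2 * Module.finrank K W ≤ Module.finrank K V := by
  have hle : W ≤ B.orthogonal W := fun v hv => (mem_orthogonal_iff).2 fun u hu => hW u hu v hv
  have hW_le := Submodule.finrank_le W
  have hW_le_orth := Submodule.finrank_mono hle
  rw [finrank_orthogonal hB] at hW_le_orth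
  omega

theorem Matrix.re_map_ofReal_mulVec {m n : Type*} [Fintype n] (A : Matrix m n ℝ) (w : n → ℂ)
    (i : m) : ((A.map Complex.ofReal *ᵥ w) i).re = (A *ᵥ fun j => (w j).re) i := by
  simp [mulVec, dotProduct, Complex.re_sum]

namespace Matrix

open Module.End Nat

variable {m : Type*} [Fintype m] [DecidableEq m]

theorem transpose_exp_mul_mul_exp {S A : Matrix m m ℝ} (hS : Sᵀ * A + A * S = 0) (t : ℝ) :
    (exp (t • S))ᵀ * A * exp (t • S) = A := by
  have hsemi : SemiconjBy A (t • S) (-(t • Sᵀ)) := by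
    rw [SemiconjBy, Matrix.mul_smul, neg_mul, Matrix.smul_mul, eq_neg_iff_add_eq_zero,
      ← smul_add, add_comm, hS, smul_zero]
  rw [← exp_transpose, transpose_smul, ← neg_neg (t • Sᵀ)]
  exact hsemi.exp_neg_mul_mul_exp_eq_self

theorem dotProduct_mulVec_eq_zero_of_tendsto {S A : Matrix m m ℝ} (hS : Sᵀ * A + A * S = 0)
    {l : Filter ℝ} [l.NeBot] {u v : m → ℝ}
    (hu : Tendsto (fun t : ℝ => exp (t • S) *ᵥ u) l (𝓝 0))
    (hv : Tendsto (fun t : ℝ => exp (t • S) *ᵥ v) l (𝓝 0)) :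
    A *ᵥ u ⬝ᵥ v = 0 := by
  have hinv (t : ℝ) : A *ᵥ (exp (t • S) *ᵥ u) ⬝ᵥ (exp (t • S) *ᵥ v) = A *ᵥ u ⬝ᵥ v := by
    rw [mulVec_mulVec, dotProduct_mulVec, ← mulVec_transpose, mulVec_mulVec, ← Matrix.mul_assoc,
      transpose_exp_mul_mul_exp hS]
  have hform : Continuous fun p : (m → ℝ) × (m → ℝ) => A *ᵥ p.1 ⬝ᵥ p.2 :=
    (continuous_const.matrix_mulVec continuous_fst).dotProduct continuous_snd
  have hlim := (hform.tendsto (0, 0)).comp (hu.prodMk_nhds hv)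
  simp only [mulVec_zero, dotProduct_zero] at hlim
  exact tendsto_nhds_unique (hlim.congr hinv) tendsto_const_nhds |>.symm

theorem exp_mulVec_eq_sum {N : Matrix m m ℂ} {v : m → ℂ} {k : ℕ} (hv : N ^ k *ᵥ v = 0) :
    exp N *ᵥ v = ∑ j ∈ Finset.range k, (j ! : ℂ)⁻¹ • (N ^ j *ᵥ v) := by
  have hseries := (exp_series_hasSum_exp' (𝕂 := ℂ) N).map (mulVec.addMonoidHomLeft v)
    (continuous_id.matrix_mulVec continuous_const)
  refine hseries.unique (hasSum_sum_of_ne_finset_zero fun j hj => ?_) |>.trans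
    (Finset.sum_congr rfl fun j _ => smul_mulVec _ _ _)
  rw [Finset.mem_range, not_lt] at hj
  change ((j ! : ℂ)⁻¹ • N ^ j) *ᵥ v = 0
  rw [smul_mulVec, ← Nat.sub_add_cancel hj, pow_add, ← mulVec_mulVec, hv, mulVec_zero, smul_zero]

theorem tendsto_exp_smul_mulVec_atTop {M : Matrix m m ℂ} {μ : ℂ} (hμ : μ.re < 0)
    {v : m → ℂ} {k : ℕ} (hv : (M - μ • 1) ^ k *ᵥ v = 0) :
    Tendsto (fun t : ℝ => exp (t • M) *ᵥ v) atTop (𝓝 0) := by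
  set N := M - μ • 1
  have hexp (t : ℝ) : exp (t • M) = Complex.exp (t * μ) • exp ((t : ℂ) • N) := by
    have hsplit : t • M = algebraMap ℂ _ (t * μ) + (t : ℂ) • N := by
      rw [Algebra.algebraMap_eq_smul_one, smul_sub, ← smul_assoc, smul_eq_mul, add_sub_cancel,
        ← Complex.coe_smul]
    have hscalar : exp (algebraMap ℂ (Matrix m m ℂ) (t * μ)) =
        algebraMap ℂ _ (Complex.exp (t * μ)) := by
      rw [Complex.exp_eq_exp_ℂ]
      exact (algebraMap_exp_comm _).symm
    rw [hsplit, exp_add_of_commute _ _ (Algebra.commute_algebraMap_left _ _), hscalar,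
      ← Algebra.smul_def]
  have hsum (t : ℝ) : exp (t • M) *ᵥ v =
      ∑ j ∈ Finset.range k, (Complex.exp (t * μ) * (t : ℂ) ^ j * (j ! : ℂ)⁻¹) • (N ^ j *ᵥ v) := by
    have hkill : ((t : ℂ) • N) ^ k *ᵥ v = 0 := by rw [smul_pow, smul_mulVec, hv, smul_zero]
    rw [hexp, smul_mulVec, exp_mulVec_eq_sum hkill, Finset.smul_sum]
    refine Finset.sum_congr rfl fun j _ => ?_
    rw [smul_pow, smul_mulVec, smul_smul, smul_smul]
    congr 1
    ring
  simp_rw [hsum]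
  rw [← Finset.sum_const_zero (s := Finset.range k)]
  refine tendsto_finsetSum _ fun j _ => ?_
  simpa using ((Complex.tendsto_exp_mul_mul_pow_atTop hμ j).mul_const (j ! : ℂ)⁻¹).smul_const
    (N ^ j *ᵥ v)

theorem tendsto_exp_smul_mulVec_atBot {M : Matrix m m ℂ} {μ : ℂ} (hμ : 0 < μ.re)
    {v : m → ℂ} {k : ℕ} (hv : (M - μ • 1) ^ k *ᵥ v = 0) :
    Tendsto (fun t : ℝ => exp (t • M) *ᵥ v) atBot (𝓝 0) := by
  have hv' : (-M - (-μ) • 1) ^ k *ᵥ v = 0 := by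
    rw [show -M - (-μ) • 1 = -(M - μ • 1) by rw [neg_smul]; abel, neg_pow,
      ← mulVec_mulVec, hv, mulVec_zero]
  refine ((tendsto_exp_smul_mulVec_atTop (by simpa using hμ) hv').comp
    tendsto_neg_atBot_atTop).congr fun t => ?_
  simp

def decaySubmodule (M : Matrix m m ℂ) (l : Filter ℝ) : Submodule ℂ (m → ℂ) where
  carrier := {v | Tendsto (fun t : ℝ => exp (t • M) *ᵥ v) l (𝓝 0)}
  add_mem' {a b} ha hb := by simpa [mulVec_add] using ha.add hb
  zero_mem' := by simpa using tendsto_const_nhds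
  smul_mem' c a ha := by simpa [mulVec_smul] using ha.const_smul c

theorem decaySubmodule_atTop_sup_atBot_eq_top {M : Matrix m m ℂ}
    (hM : ∀ μ, HasEigenvalue (toLin' M) μ → μ.re ≠ 0) :
    M.decaySubmodule atTop ⊔ M.decaySubmodule atBot = ⊤ := by
  rw [eq_top_iff, ← iSup_maxGenEigenspace_eq_top (toLin' M)]
  refine iSup_le fun μ v hv => ?_
  obtain ⟨k, hk⟩ := (mem_maxGenEigenspace _ _ _).1 hv
  have hkM : (M - μ • 1) ^ k *ᵥ v = 0 := by
    have hlin : toLinAlgEquiv' ((M - μ • 1) ^ k) = (toLin' M - μ • 1) ^ k := by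
      rw [map_pow, map_sub, map_smul, map_one]
      rfl
    rw [← toLin'_apply]
    change toLinAlgEquiv' _ v = 0
    rw [hlin, hk]
  rcases eq_or_ne v 0 with rfl | hv0
  · exact zero_mem _
  have hμ : HasEigenvalue (toLin' M) μ :=
    hasEigenvalue_of_hasGenEigenvalue (k := k) <| hasGenEigenvalue_iff.2 <|
      (Submodule.ne_bot_iff _).2 ⟨v, mem_genEigenspace_nat.2 hk, hv0⟩
  rcases (hM μ hμ).lt_or_gt with hneg | hpos
  · exact Submodule.mem_sup_left (tendsto_exp_smul_mulVec_atTop hneg hkM)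
  · exact Submodule.mem_sup_right (tendsto_exp_smul_mulVec_atBot hpos hkM)

theorem exp_map_ofReal (A : Matrix m m ℝ) :
    (exp A).map Complex.ofReal = exp (A.map Complex.ofReal) :=
  map_exp Complex.ofRealHom.mapMatrix (continuous_id.matrix_map Complex.continuous_ofReal) A

theorem tendsto_exp_smul_mulVec_re {S : Matrix m m ℝ} {l : Filter ℝ} {w : m → ℂ}
    (hw : w ∈ (S.map Complex.ofReal).decaySubmodule l) :
    Tendsto (fun t : ℝ => exp (t • S) *ᵥ fun i => (w i).re) l (𝓝 0) := by
  have hre : Tendsto (fun t : ℝ => fun i => ((exp (t • S.map Complex.ofReal) *ᵥ w) i).re) l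
      (𝓝 0) := by
    refine tendsto_pi_nhds.2 fun i => ?_
    simpa [Function.comp_def] using (Complex.continuous_re.tendsto 0).comp (tendsto_pi_nhds.1 hw i)
  refine hre.congr fun t => funext fun i => ?_
  rw [← Matrix.map_smul _ _ fun x => Complex.ofReal_mul t x, ← exp_map_ofReal,
    re_map_ofReal_mulVec]

end Matrix

theorem Jmat_mul_Jmat (n : ℕ) : Jmat n * Jmat n = -1 := by
  rw [show Jmat n = reindexAlgEquiv ℝ ℝ (finSumFinEquiv.trans (finCongr (two_mul n).symm))
    (J (Fin n) ℝ) from rfl, ← map_mul, J_squared, map_neg, map_one]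

theorem finrank_le_of_isotropic {n : ℕ} {W : Submodule ℝ (Fin (2 * n) → ℝ)}
    (hW : ∀ u ∈ W, ∀ v ∈ W, symplForm n u v = 0) : Module.finrank ℝ W ≤ n := by
  have hdet : IsUnit (Jmat n).det :=
    isUnit_det_of_right_inverse (B := -Jmat n) (by rw [Matrix.mul_neg, Jmat_mul_Jmat, neg_neg])
  have hB : (toBilin' (Jmat n)).Nondegenerate :=
    LinearMap.BilinForm.nondegenerate_toBilin'_iff_det_ne_zero.2 hdet.ne_zero
  have h := LinearMap.BilinForm.two_mul_finrank_le_of_isotropic hB (W := W) fun u hu v hv => by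
    rw [toBilin'_apply', dotProduct_comm]
    exact hW v hv u hu
  rw [Module.finrank_fin_fun] at h
  omega

theorem negSpace_sup_posSpace_eq_top {d : ℕ} {T : Matrix (Fin d) (Fin d) ℝ}
    (hT : IsHyperbolic T) : negSpace d T ⊔ posSpace d T = ⊤ := by
  refine eq_top_iff.2 fun v _ => ?_
  have hv : (fun i => (v i : ℂ)) ∈ (T.map Complex.ofReal).decaySubmodule atTop ⊔
      (T.map Complex.ofReal).decaySubmodule atBot := by
    rw [decaySubmodule_atTop_sup_atBot_eq_top hT]
    trivial
  obtain ⟨a, ha, b, hb, hab⟩ := Submodule.mem_sup.1 hv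
  refine Submodule.mem_sup.2 ⟨_, tendsto_exp_smul_mulVec_re ha, _, tendsto_exp_smul_mulVec_re hb,
    funext fun i => ?_⟩
  simpa using congrArg Complex.re (congrFun hab i)

/-- For a hyperbolic Hamiltonian matrix `S`, the stable space `V⁻(S)` is a Lagrangian
subspace of `(ℝ^{2n}, ω)`: it is isotropic and has dimension `n`. -/
theorem stmt2 (n : ℕ) (S : Matrix (Fin (2*n)) (Fin (2*n)) ℝ)
    (hHam : Sᵀ * Jmat n + Jmat n * S = 0) (hHyp : IsHyperbolic S) :
    (∀ u ∈ negSpace (2*n) S, ∀ v ∈ negSpace (2*n) S, symplForm n u v = 0) ∧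
    Module.finrank ℝ (negSpace (2*n) S) = n := by
  have hiso (l : Filter ℝ) [l.NeBot] (u v : Fin (2 * n) → ℝ)
      (hu : Tendsto (fun t : ℝ => exp (t • S) *ᵥ u) l (𝓝 0))
      (hv : Tendsto (fun t : ℝ => exp (t • S) *ᵥ v) l (𝓝 0)) : symplForm n u v = 0 :=
    dotProduct_mulVec_eq_zero_of_tendsto hHam hu hv
  have hneg := finrank_le_of_isotropic (W := negSpace (2 * n) S) fun u hu v hv =>
    hiso atTop u v hu hv
  have hpos := finrank_le_of_isotropic (W := posSpace (2 * n) S) fun u hu v hv =>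
    hiso atBot u v hu hv
  have hsum := Submodule.finrank_add_le_finrank_add_finrank (negSpace (2 * n) S)
    (posSpace (2 * n) S)
  rw [negSpace_sup_posSpace_eq_top hHyp, finrank_top, Module.finrank_fin_fun] at hsum
  exact ⟨fun u hu v hv => hiso atTop u v hu hv, by omega⟩
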